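/- Let K be a field and n ≥ 1. Let E_n be the K-module K^n × U(K^n) equipped with the K-bilinear product (a, α)·(b, β) = (0, α·r_b + β·l_a) (products taken in the algebra U(K^n)). Then: (i) E_n satisfies the left and right alternative laws (xx)y = x(xy) and (xy)y = x(yy) for all x, y ∈ E_n; (ii) (uv)(xy) = 0 for all u, v, x, y ∈ E_n; and (iii) writing e_1, …, e_n for the standard basis of K^n, the left-normed product ((x_1 x_2) x_3 ⋯) x_n is nonzero, where x_1 = (0, r_{e_1}) and x_i = (e_i, 0) for 2 ≤ i ≤ n. -/

import Mathlib

/-!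
Universal enveloping algebra of the abelian alternative algebra `K^n`.

`T = Tens_K(K^n ⊕ K^n)`; `l_a` (resp. `r_a`) is the image of `(a,0)` (resp. `(0,a)`).
`U(K^n)` is the quotient of `T` by the two-sided ideal generated by
`l_a·l_a`, `r_a·r_a`, `l_b·l_a + r_a·r_b`, `r_b·l_a − l_a·r_b − r_a·r_b`.
-/

noncomputable section

/-- `l_a ∈ Tens_K(K^n ⊕ K^n)`. -/
def lT (K : Type) [CommRing K] (n : ℕ) (a : Fin n → K) :
    TensorAlgebra K ((Fin n → K) × (Fin n → K)) :=
  TensorAlgebra.ι K (a, 0)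

/-- `r_a ∈ Tens_K(K^n ⊕ K^n)`. -/
def rT (K : Type) [CommRing K] (n : ℕ) (a : Fin n → K) :
    TensorAlgebra K ((Fin n → K) × (Fin n → K)) :=
  TensorAlgebra.ι K (0, a)

/-- The relations defining `U(K^n)`: quotienting by this relation is the same as
quotienting by the two-sided ideal generated by the listed elements. -/
inductive URel (K : Type) [CommRing K] (n : ℕ) :
    TensorAlgebra K ((Fin n → K) × (Fin n → K)) →
    TensorAlgebra K ((Fin n → K) × (Fin n → K)) → Prop
  | ll (a : Fin n → K) : URel K n (lT K n a * lT K n a) 0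
  | rr (a : Fin n → K) : URel K n (rT K n a * rT K n a) 0
  | llrr (a b : Fin n → K) : URel K n (lT K n b * lT K n a + rT K n a * rT K n b) 0
  | rl (a b : Fin n → K) :
      URel K n (rT K n b * lT K n a - lT K n a * rT K n b - rT K n a * rT K n b) 0

/-- The universal enveloping algebra `U(K^n)`. -/
def Ualg (K : Type) [CommRing K] (n : ℕ) : Type := RingQuot (URel K n)

instance (K : Type) [CommRing K] (n : ℕ) : Ring (Ualg K n) :=
  inferInstanceAs (Ring (RingQuot (URel K n)))

instance (K : Type) [CommRing K] (n : ℕ) : Algebra K (Ualg K n) :=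
  inferInstanceAs (Algebra K (RingQuot (URel K n)))

/-- Image of `l_a` in `U(K^n)`. -/
def lU (K : Type) [CommRing K] (n : ℕ) (a : Fin n → K) : Ualg K n :=
  RingQuot.mkAlgHom K (URel K n) (lT K n a)

/-- Image of `r_a` in `U(K^n)`. -/
def rU (K : Type) [CommRing K] (n : ℕ) (a : Fin n → K) : Ualg K n :=
  RingQuot.mkAlgHom K (URel K n) (rT K n a)

/-- The weight-one part `V ⊆ U(K^n)`: the span of all `l_a` and `r_a`. -/
def V (K : Type) [CommRing K] (n : ℕ) : Submodule K (Ualg K n) :=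
  Submodule.span K (Set.range (lU K n) ∪ Set.range (rU K n))


/-- The standard basis vector `e_i` of `K^n`. -/
def stdBasis (K : Type) [CommRing K] (n : ℕ) (i : Fin n) : Fin n → K :=
  Pi.single i 1


/-!
Expanding the product, the two alternative laws become the defining relations
`r_b l_a = (l_a + r_a) r_b` and `l_a r_b = (r_b + l_b) l_a` of `U(K^n)`, up to terms killed by
`l_a² = r_a² = 0`; products of products vanish because every product has zero `K^n`-component.
The left-normed product is `(0, r_{e_1} ⋯ r_{e_n})`. To see that it is nonzero, represent
`U(K^n)` in `Λ(K^n) ⊗ M₂(K)` by `l_a ↦ a ⊗ P`, `r_a ↦ a ⊗ Q`: since the `a ∈ K^n` anticommute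
and square to zero in the exterior algebra, the defining relations only ask that `P² = Q²` and
`QP + PQ + Q² = 0`, which holds for the two reflections generating `S₃` in its two-dimensional
representation. Then `r_{e_1} ⋯ r_{e_n}` maps to `(e_1 ∧ ⋯ ∧ e_n) ⊗ Qⁿ ≠ 0`.
-/

open ExteriorAlgebra TensorProduct

theorem ExteriorAlgebra.ι_mul_ι_comm {R M : Type*} [CommRing R] [AddCommGroup M] [Module R M]
    (a b : M) : ι R b * ι R a = -(ι R a * ι R b) :=
  eq_neg_of_add_eq_zero_left (ι_add_mul_swap b a)

theorem ExteriorAlgebra.ιMulti_basis_ne_zero {R M : Type*} [CommRing R] [Nontrivial R]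
    [AddCommGroup M] [Module R M] {k : ℕ} (b : Module.Basis (Fin k) R M) : ιMulti R k b ≠ 0 := by
  intro h
  have h' : exteriorPower.ιMulti R k b = 0 := Subtype.ext h
  have := congrArg (exteriorPower.alternatingMapLinearEquiv b.det) h'
  rw [exteriorPower.alternatingMapLinearEquiv_apply_ιMulti, map_zero, b.det_self] at this
  exact one_ne_zero this

theorem Algebra.TensorProduct.prod_ofFn_tmul {R A B : Type*} [CommRing R] [Ring A] [Algebra R A]
    [Ring B] [Algebra R B] {k : ℕ} (x : Fin k → A) (Q : B) :
    (List.ofFn fun i => x i ⊗ₜ[R] Q).prod = (List.ofFn x).prod ⊗ₜ (Q ^ k) := by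
  induction k with
  | zero => simp [Algebra.TensorProduct.one_def]
  | succ k ih => simp only [List.ofFn_succ, List.prod_cons, ih, tmul_mul_tmul, pow_succ']

theorem Algebra.TensorProduct.tmul_ne_zero_of_isUnit {K A B : Type*} [Field K] [Ring A]
    [Algebra K A] [Ring B] [Algebra K B] [Nontrivial B] {x : A} (hx : x ≠ 0) {u : B}
    (hu : IsUnit u) : x ⊗ₜ[K] u ≠ 0 := by
  have hxu : x ⊗ₜ[K] u = includeLeft (S := K) x * includeRight u := by simp
  rw [hxu, Ne, (hu.map _).mul_left_eq_zero,
    map_eq_zero_iff _ (includeLeft_injective (algebraMap K B).injective)]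
  exact hx

def ιTmul {R M B : Type*} [CommRing R] [AddCommGroup M] [Module R M] [Ring B] [Algebra R B]
    (Q : B) : M →ₗ[R] ExteriorAlgebra R M ⊗[R] B :=
  (TensorProduct.mk R _ B).flip Q ∘ₗ ι R

@[simp]
theorem ιTmul_apply {R M B : Type*} [CommRing R] [AddCommGroup M] [Module R M] [Ring B]
    [Algebra R B] (Q : B) (a : M) : ιTmul Q a = ι R a ⊗ₜ[R] Q :=
  rfl

namespace Ualg

variable {K : Type} [CommRing K] {n : ℕ}

@[simp]
theorem lU_zero : lU K n 0 = 0 :=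
  (congrArg (RingQuot.mkAlgHom K (URel K n)) (map_zero (TensorAlgebra.ι K))).trans (map_zero _)

@[simp]
theorem rU_zero : rU K n 0 = 0 :=
  (congrArg (RingQuot.mkAlgHom K (URel K n)) (map_zero (TensorAlgebra.ι K))).trans (map_zero _)

theorem lU_mul_self (a : Fin n → K) : lU K n a * lU K n a = 0 := by
  have h := RingQuot.mkAlgHom_rel K (URel.ll a)
  rwa [map_mul, map_zero] at h

theorem rU_mul_self (a : Fin n → K) : rU K n a * rU K n a = 0 := by
  have h := RingQuot.mkAlgHom_rel K (URel.rr a)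
  rwa [map_mul, map_zero] at h

theorem lU_mul_lU (a b : Fin n → K) : lU K n b * lU K n a = -(rU K n a * rU K n b) := by
  have h := RingQuot.mkAlgHom_rel K (URel.llrr a b)
  rw [map_add, map_mul, map_mul, map_zero] at h
  exact eq_neg_of_add_eq_zero_left h

theorem rU_mul_lU (a b : Fin n → K) :
    rU K n b * lU K n a = (lU K n a + rU K n a) * rU K n b := by
  have h := RingQuot.mkAlgHom_rel K (URel.rl a b)
  rw [map_sub, map_sub, map_mul, map_mul, map_mul, map_zero, sub_sub, sub_eq_zero] at h
  rw [add_mul]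
  exact h

theorem lU_mul_rU (a b : Fin n → K) :
    lU K n a * rU K n b = (rU K n b + lU K n b) * lU K n a := by
  rw [add_mul, rU_mul_lU, lU_mul_lU]
  noncomm_ring

section Lift

variable {A : Type*} [Ring A] [Algebra K A] (l r : (Fin n → K) →ₗ[K] A)

def lift (hl : ∀ a, l a * l a = 0) (hr : ∀ a, r a * r a = 0)
    (hlr : ∀ a b, l b * l a + r a * r b = 0)
    (hrl : ∀ a b, r b * l a - l a * r b - r a * r b = 0) : Ualg K n →ₐ[K] A :=
  RingQuot.liftAlgHom K ⟨TensorAlgebra.lift K (l.coprod r), by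
    rintro _ _ (⟨a⟩ | ⟨a⟩ | ⟨a, b⟩ | ⟨a, b⟩) <;> simp [lT, rT, *]⟩

theorem lift_rU (hl hr hlr hrl) (a : Fin n → K) : lift l r hl hr hlr hrl (rU K n a) = r a :=
  (RingQuot.liftAlgHom_mkAlgHom_apply K _ _ _).trans (by simp [rT])

end Lift

section ExteriorTensor

variable {B : Type*} [Ring B] [Algebra K B] (P Q : B) (hPQ : P * P = Q * Q)
  (hQP : Q * P + P * Q + Q * Q = 0)

def toExteriorTensor : Ualg K n →ₐ[K] ExteriorAlgebra K (Fin n → K) ⊗[K] B :=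
  lift (ιTmul P) (ιTmul Q) (by simp) (by simp)
    (fun a b => by
      simp only [ιTmul_apply, Algebra.TensorProduct.tmul_mul_tmul, ι_mul_ι_comm a b, hPQ,
        ← add_tmul, neg_add_cancel, zero_tmul])
    (fun a b => by
      simp only [ιTmul_apply, Algebra.TensorProduct.tmul_mul_tmul, ι_mul_ι_comm a b, neg_tmul,
        ← tmul_neg, ← tmul_sub]
      rw [show -(Q * P) - P * Q - Q * Q = -(Q * P + P * Q + Q * Q) by abel, hQP, neg_zero,
        tmul_zero])

theorem toExteriorTensor_prod_rU {k : ℕ} (v : Fin k → Fin n → K) :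
    toExteriorTensor P Q hPQ hQP (List.ofFn fun i => rU K n (v i)).prod
      = ιMulti K k v ⊗ₜ (Q ^ k) := by
  simp only [map_list_prod, List.map_ofFn, Function.comp_def, toExteriorTensor, lift_rU,
    ιTmul_apply, Algebra.TensorProduct.prod_ofFn_tmul, ιMulti_apply]

end ExteriorTensor

end Ualg

section Reflections

variable (K : Type) [CommRing K]

def reflP : Matrix (Fin 2) (Fin 2) K := !![1, -1; 0, -1]

def reflQ : Matrix (Fin 2) (Fin 2) K := !![0, 1; 1, 0]

theorem reflQ_mul_self : reflQ K * reflQ K = 1 := by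
  simp [reflQ, Matrix.one_fin_two]

theorem reflP_mul_self : reflP K * reflP K = reflQ K * reflQ K := by
  simp [reflP, reflQ_mul_self, Matrix.one_fin_two]

theorem reflQ_mul_reflP_add : reflQ K * reflP K + reflP K * reflQ K + reflQ K * reflQ K = 0 := by
  rw [Matrix.eta_fin_two 0]
  simp [reflP, reflQ]

end Reflections

theorem Ualg.prod_rU_basis_ne_zero {K : Type} [Field K] {n : ℕ}
    (b : Module.Basis (Fin n) K (Fin n → K)) : (List.ofFn fun i => rU K n (b i)).prod ≠ 0 := by
  intro h
  have h' := congrArg (toExteriorTensor _ _ (reflP_mul_self K) (reflQ_mul_reflP_add K)) h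
  rw [toExteriorTensor_prod_rU, map_zero] at h'
  exact Algebra.TensorProduct.tmul_ne_zero_of_isUnit (ιMulti_basis_ne_zero b)
    ((IsUnit.of_mul_eq_one _ (reflQ_mul_self K)).pow n) h'

namespace En

open Ualg

variable {K : Type} [CommRing K] {n : ℕ}

def mul (p q : (Fin n → K) × Ualg K n) : (Fin n → K) × Ualg K n :=
  (0, p.2 * rU K n q.1 + q.2 * lU K n p.1)

local infixl:70 " ⋆ " => En.mul

theorem mul_self_mul (x y : (Fin n → K) × Ualg K n) : x ⋆ x ⋆ y = x ⋆ (x ⋆ y) := by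
  simp only [mul, lU_zero, rU_zero, mul_zero, add_zero, zero_add, Prod.mk.injEq, true_and]
  rw [add_mul, add_mul, mul_assoc y.2, lU_mul_self, mul_zero, add_zero,
    mul_assoc x.2 (rU K n y.1), rU_mul_lU]
  noncomm_ring

theorem mul_mul_self (x y : (Fin n → K) × Ualg K n) : x ⋆ y ⋆ y = x ⋆ (y ⋆ y) := by
  simp only [mul, lU_zero, rU_zero, mul_zero, add_zero, zero_add, Prod.mk.injEq, true_and]
  rw [add_mul, mul_assoc x.2 (rU K n y.1), rU_mul_self, mul_zero, zero_add,
    mul_assoc y.2 (lU K n x.1), lU_mul_rU]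
  noncomm_ring

theorem mul_mul_mul_eq_zero (u v x y : (Fin n → K) × Ualg K n) : u ⋆ v ⋆ (x ⋆ y) = 0 := by
  simp [mul]

theorem foldl_mul_ofFn_inl (α : Ualg K n) {k : ℕ} (v : Fin k → Fin n → K) :
    (List.ofFn fun i => (v i, 0)).foldl mul (0, α)
      = (0, α * (List.ofFn fun i => rU K n (v i)).prod) := by
  induction k generalizing α with
  | zero => simp
  | succ k ih => simp [List.ofFn_succ, mul, ih, mul_assoc]

end En


/-- Let `E_n = K^n × U(K^n)` with the product `(a, α)·(b, β) = (0, α·r_b + β·l_a)`.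
Then `E_n` satisfies the left and right alternative laws, every product of two products
vanishes, and yet the left-normed product `((x_1 x_2) x_3 ⋯) x_n` is nonzero, where
`x_1 = (0, r_{e_1})` and `x_i = (e_i, 0)` for `2 ≤ i ≤ n`. -/
theorem En_solvable_not_nilpotent (K : Type) [Field K] (n : ℕ) (hn : 1 ≤ n)
    (mul : ((Fin n → K) × Ualg K n) → ((Fin n → K) × Ualg K n) → ((Fin n → K) × Ualg K n))
    (hmul : ∀ p q, mul p q = (0, p.2 * rU K n q.1 + q.2 * lU K n p.1)) :
    (∀ x y, mul (mul x x) y = mul x (mul x y)) ∧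
    (∀ x y, mul (mul x y) y = mul x (mul y y)) ∧
    (∀ u v x y, mul (mul u v) (mul x y) = 0) ∧
    List.foldl mul ((0 : Fin n → K), rU K n (stdBasis K n ⟨0, hn⟩))
      (List.ofFn fun i : Fin (n - 1) =>
        ((stdBasis K n ⟨i.val + 1, by have := i.isLt; omega⟩, (0 : Ualg K n)))) ≠ 0 := by
  obtain rfl : mul = En.mul := funext₂ hmul
  refine ⟨En.mul_self_mul, En.mul_mul_self, En.mul_mul_mul_eq_zero, ?_⟩
  obtain ⟨m, rfl⟩ : ∃ m, n = m + 1 := ⟨n - 1, by omega⟩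
  have hstd : stdBasis K (m + 1) = Pi.basisFun K (Fin (m + 1)) := by
    funext i
    rw [Pi.basisFun_apply, stdBasis]
  have key := Ualg.prod_rU_basis_ne_zero (Pi.basisFun K (Fin (m + 1)))
  rw [List.ofFn_succ, List.prod_cons, ← hstd] at key
  rw [En.foldl_mul_ofFn_inl]
  exact fun h => key (congrArg Prod.snd h)

end
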